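/- arXiv:2301.08981 — 2 statements merged into one kernel-verified Lean document; each statement's English description precedes it below -/
import Mathlib

section
/- Assume there exists c ∈ ℕ^r with Ḡ(c) ⊆ O (a conductor). Then for every ℓ ∈ ℕ^r and every index i: h(ℓ+E_i) > h(ℓ) if and only if there exists s ∈ ℕ^r with s ≥ ℓ componentwise, s_i = ℓ_i, and there exists f ∈ O with ord_j f = s_j for every j. -/
/-- `Gbar r ℓ` is the subspace of `r`-tuples of power series whose `i`-th component has
order at least `ℓ i`, for every `i`. -/
noncomputable def Gbar (r : ℕ) (ℓ : Fin r → ℕ) : Submodule ℂ (Fin r → PowerSeries ℂ) where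
  carrier := {f | ∀ i : Fin r, (ℓ i : ℕ∞) ≤ (f i).order}
  zero_mem' := by
    intro i
    simp [PowerSeries.order_zero]
  add_mem' := by
    intro a b ha hb i
    refine le_trans (le_min (ha i) (hb i)) ?_
    simpa using PowerSeries.min_order_le_order_add (a i) (b i)
  smul_mem' := by
    intro c f hf i
    refine PowerSeries.le_order _ _ ?_
    intro n hn
    have hlt : (n : ℕ∞) < ((f : Fin r → PowerSeries ℂ) i).order := lt_of_lt_of_le hn (hf i)
    have : (PowerSeries.coeff n) ((c • f) i) = c • (PowerSeries.coeff n) (f i) := by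
      simp
    rw [this, PowerSeries.coeff_of_lt_order n hlt, smul_zero]

/-- `F O ℓ = O ∩ Ḡ(ℓ)`, the valuation filtration of the subspace `O`. -/
noncomputable def Ffil (r : ℕ) (O : Submodule ℂ (Fin r → PowerSeries ℂ)) (ℓ : Fin r → ℕ) :
    Submodule ℂ (Fin r → PowerSeries ℂ) :=
  O ⊓ Gbar r ℓ

/-- `hfun O ℓ = dim_ℂ O / (O ∩ Ḡ(ℓ))`, the Hilbert function of the filtration. -/
noncomputable def hfun (r : ℕ) (O : Submodule ℂ (Fin r → PowerSeries ℂ)) (ℓ : Fin r → ℕ) : ℕ :=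
  Module.finrank ℂ (O ⧸ (Gbar r ℓ).comap O.subtype)

/-- `hbarfun O ℓ = dim_ℂ V / (Ḡ(ℓ) + O)`. -/
noncomputable def hbarfun (r : ℕ) (O : Submodule ℂ (Fin r → PowerSeries ℂ)) (ℓ : Fin r → ℕ) : ℕ :=
  Module.finrank ℂ ((Fin r → PowerSeries ℂ) ⧸ (Gbar r ℓ ⊔ O))

/-- `eN i` is the `i`-th standard basis vector of `ℕ^r`. -/
def eN {r : ℕ} (i : Fin r) : Fin r → ℕ := fun j => if j = i then 1 else 0

/-!
Since `F(ℓ + E_i) ⊆ F(ℓ)` and `O / F(ℓ)` is finite-dimensional, `h(ℓ + E_i) > h(ℓ)` exactly when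
some `f ∈ O` has `ord_j f ≥ ℓ_j` for all `j` and `ord_i f = ℓ_i`. Such an `f` may have zero
components, i.e. infinite orders. Adding `(X ^ N_j)_j` with every `N_j` beyond `c_j`, `ℓ_j` and
the finite orders of `f` stays in `O` thanks to the conductor, and replaces each order of `f` by
`min (ord_j f) N_j`: all become finite, none drops below `ℓ_j`, and `ord_i` is unchanged.
-/

open Module

namespace PowerSeries

variable {R : Type*} [Semiring R]

theorem natCast_le_order_iff {φ : R⟦X⟧} {n : ℕ} :
    (n : ℕ∞) ≤ φ.order ↔ ∀ i < n, coeff i φ = 0 :=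
  ⟨fun h i hi => coeff_of_lt_order i (lt_of_lt_of_le (by exact_mod_cast hi) h),
    nat_le_order φ n⟩

theorem order_add_X_pow [Nontrivial R] {φ : R⟦X⟧} {n : ℕ} (h : φ.order ≠ n) :
    (φ + X ^ n).order = min φ.order n := by
  rw [order_add_of_order_ne _ _ (by rwa [order_X_pow]), order_X_pow]

end PowerSeries

theorem Submodule.finrank_quotient_lt_of_lt {K V : Type*} [DivisionRing K] [AddCommGroup V]
    [Module K V] {p q : Submodule K V} (h : p < q) [FiniteDimensional K (V ⧸ p)] :
    finrank K (V ⧸ q) < finrank K (V ⧸ p) := by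
  obtain ⟨x, hxq, hxp⟩ := SetLike.exists_of_lt h
  have hnot_inj : ¬ Function.Injective (factor h.le) := fun hinj =>
    hxp <| (Quotient.mk_eq_zero p).1 <| hinj <| by
      simpa using (Quotient.mk_eq_zero q).2 hxq
  refine (LinearMap.finrank_le_finrank_of_surjective (factor_surjective h.le)).lt_of_ne
    fun heq => hnot_inj ?_
  have : FiniteDimensional K (V ⧸ q) := .of_surjective _ (factor_surjective h.le)
  exact (LinearMap.injective_iff_surjective_of_finrank_eq_finrank heq.symm).2
    (factor_surjective h.le)

theorem Submodule.finiteDimensional_quotient_comap_subtype {K V : Type*} [DivisionRing K]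
    [AddCommGroup V] [Module K V] (O W : Submodule K V) [FiniteDimensional K (V ⧸ W)] :
    FiniteDimensional K (O ⧸ W.comap O.subtype) :=
  Module.Finite.of_injective ((W.comap O.subtype).mapQ W O.subtype le_rfl)
    (LinearMap.ker_eq_bot.1 (by rw [ker_mapQ, mkQ_map_self]))

section Gbar

variable {r : ℕ}

theorem Gbar_anti : Antitone (Gbar r) :=
  fun _ _ h _ hf i => le_trans (by exact_mod_cast h i) (hf i)

noncomputable def truncGbar (ℓ : Fin r → ℕ) :
    (Fin r → PowerSeries ℂ) →ₗ[ℂ] ∀ i, Fin (ℓ i) → ℂ :=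
  LinearMap.pi (φ := fun i => Fin (ℓ i) → ℂ) fun i =>
    LinearMap.pi fun k => PowerSeries.coeff (R := ℂ) k ∘ₗ LinearMap.proj i

theorem ker_truncGbar (ℓ : Fin r → ℕ) : LinearMap.ker (truncGbar ℓ) = Gbar r ℓ := by
  ext f
  simp only [LinearMap.mem_ker, funext_iff]
  refine forall_congr' fun i => Fin.forall_iff.trans ?_
  exact PowerSeries.natCast_le_order_iff.symm

instance (ℓ : Fin r → ℕ) : FiniteDimensional ℂ ((Fin r → PowerSeries ℂ) ⧸ Gbar r ℓ) := by
  rw [← ker_truncGbar]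
  exact .equiv (truncGbar ℓ).quotKerEquivRange.symm

theorem notMem_Gbar_add_eN_iff {ℓ : Fin r → ℕ} {i : Fin r} {f : Fin r → PowerSeries ℂ}
    (hf : f ∈ Gbar r ℓ) : f ∉ Gbar r (ℓ + eN i) ↔ (f i).order = ℓ i := by
  have hmem : f ∈ Gbar r (ℓ + eN i) ↔ ((ℓ i + 1 : ℕ) : ℕ∞) ≤ (f i).order := by
    refine ⟨fun h => by simpa [eN] using h i, fun h j => ?_⟩
    by_cases hj : j = i
    · subst hj
      simpa [eN] using h
    · simpa [eN, hj] using hf j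
  rw [hmem, not_le, Nat.cast_succ, ENat.lt_add_one_iff (ENat.natCast_ne_top _), le_antisymm_iff,
    and_iff_left (hf i)]

theorem hfun_lt_hfun_iff (O : Submodule ℂ (Fin r → PowerSeries ℂ)) {ℓ m : Fin r → ℕ} (h : ℓ ≤ m) :
    hfun r O ℓ < hfun r O m ↔ ∃ f ∈ O, f ∈ Gbar r ℓ ∧ f ∉ Gbar r m := by
  have hle : (Gbar r m).comap O.subtype ≤ (Gbar r ℓ).comap O.subtype :=
    Submodule.comap_mono (Gbar_anti h)
  constructor
  · intro hlt
    obtain ⟨f, hfℓ, hfm⟩ := SetLike.exists_of_lt <| hle.lt_of_ne fun heq => by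
      rw [hfun, hfun, heq] at hlt
      exact hlt.false
    exact ⟨f, f.2, hfℓ, hfm⟩
  · rintro ⟨f, hfO, hfℓ, hfm⟩
    have := O.finiteDimensional_quotient_comap_subtype (Gbar r m)
    exact Submodule.finrank_quotient_lt_of_lt <|
      SetLike.lt_iff_le_and_exists.2 ⟨hle, ⟨f, hfO⟩, hfℓ, hfm⟩

theorem exists_mem_order_eq_of_conductor {O : Submodule ℂ (Fin r → PowerSeries ℂ)}
    {c ℓ : Fin r → ℕ} (hcond : Gbar r c ≤ O) {f : Fin r → PowerSeries ℂ} (hfO : f ∈ O)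
    (hfℓ : f ∈ Gbar r ℓ) :
    ∃ s : Fin r → ℕ, ℓ ≤ s ∧ (∀ j, (s j : ℕ∞) ≤ (f j).order) ∧
      ∃ g ∈ O, ∀ j, (g j).order = s j := by
  obtain ⟨N, hN⟩ : ∃ N : Fin r → ℕ, ∀ j, c j + ℓ j + (f j).order.toNat < N j :=
    ⟨_, fun j => Nat.lt_succ_self _⟩
  have hXO : (fun j => PowerSeries.X ^ N j : Fin r → PowerSeries ℂ) ∈ O := hcond fun j => by
    rw [PowerSeries.order_X_pow]
    exact_mod_cast (by have := hN j; omega : c j ≤ N j)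
  have hne : ∀ j, (f j).order ≠ N j := fun j h => by
    have := hN j
    rw [h, ENat.toNat_natCast] at this
    omega
  have hmin_ne_top : ∀ j, min (f j).order (N j) ≠ ⊤ := fun j =>
    ne_top_of_le_ne_top (ENat.natCast_ne_top _) (min_le_right _ _)
  refine ⟨fun j => (min (f j).order (N j)).toNat, fun j => ?_, fun j => ?_,
    _, O.add_mem hfO hXO, fun j => ?_⟩
  · rw [← ENat.natCast_le_natCast, ENat.natCast_toNat (hmin_ne_top j)]
    exact le_min (hfℓ j) (by exact_mod_cast (by have := hN j; omega : ℓ j ≤ N j))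
  · rw [ENat.natCast_toNat (hmin_ne_top j)]
    exact min_le_left _ _
  · rw [ENat.natCast_toNat (hmin_ne_top j)]
    exact PowerSeries.order_add_X_pow (hne j)

end Gbar

theorem statement11_general (r : ℕ) (O : Submodule ℂ (Fin r → PowerSeries ℂ))
    (c : Fin r → ℕ) (hcond : Gbar r c ≤ O) :
    ∀ (ℓ : Fin r → ℕ) (i : Fin r),
      hfun r O ℓ < hfun r O (ℓ + eN i) ↔
        ∃ s : Fin r → ℕ, ℓ ≤ s ∧ s i = ℓ i ∧
          ∃ f ∈ O, ∀ j : Fin r, (f j).order = (s j : ℕ∞) := by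
  intro ℓ i
  rw [hfun_lt_hfun_iff O le_self_add]
  constructor
  · rintro ⟨f, hfO, hfℓ, hfi⟩
    have hi := (notMem_Gbar_add_eN_iff hfℓ).1 hfi
    obtain ⟨s, hℓs, hsf, g, hgO, hg⟩ := exists_mem_order_eq_of_conductor hcond hfO hfℓ
    refine ⟨s, hℓs, le_antisymm ?_ (hℓs i), g, hgO, hg⟩
    exact_mod_cast hi ▸ hsf i
  · rintro ⟨s, hℓs, hsi, f, hfO, hf⟩
    have hfℓ : f ∈ Gbar r ℓ := fun j => hf j ▸ by exact_mod_cast hℓs j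
    exact ⟨f, hfO, hfℓ, (notMem_Gbar_add_eN_iff hfℓ).2 (by rw [hf, hsi])⟩

/-- assuming a conductor `c` with `Ḡ(c) ⊆ O`, for every `ℓ` and every index
`i`, `h(ℓ+E_i) > h(ℓ)` if and only if there is a semigroup element `s ≥ ℓ` with `s_i = ℓ_i`. -/
theorem statement11 (r : ℕ) (hr : 1 ≤ r) (O : Submodule ℂ (Fin r → PowerSeries ℂ))
    (c : Fin r → ℕ) (hcond : Gbar r c ≤ O) :
    ∀ (ℓ : Fin r → ℕ) (i : Fin r),
      hfun r O ℓ < hfun r O (ℓ + eN i) ↔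
        ∃ s : Fin r → ℕ, ℓ ≤ s ∧ s i = ℓ i ∧
          ∃ f ∈ O, ∀ j : Fin r, (f j).order = (s j : ℕ∞) :=
  statement11_general r O c hcond
end

section
/- Let ℓ, ℓ* ∈ ℕ^r be such that F(ℓ*) = F(ℓ) and every ℓ' ∈ ℕ^r with F(ℓ') = F(ℓ) satisfies ℓ' ≤ ℓ* (i.e., ℓ* is the unique maximal point of the level set of F(ℓ)). Then for every subspace G of V with G ≠ F(ℓ) and every index i: F(ℓ+E_i) = G if and only if F(ℓ*+E_i) = G and ℓ_i = ℓ*_i. -/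
/-!
Since `Ḡ(a ⊔ b) = Ḡ(a) ∩ Ḡ(b)`, we get `F(c ⊔ ℓ*) = F(c) ∩ F(ℓ*) = F(c) ∩ F(ℓ) = F(c)` for every
`c ≥ ℓ`. For `c = ℓ + E_i` the join `c ⊔ ℓ*` is `ℓ* + E_i` when `ℓ_i = ℓ*_i`, and `ℓ*` otherwise;
in the latter case `F(ℓ + E_i) = F(ℓ*) = F(ℓ) ≠ G`, so neither side of the equivalence holds.
-/

lemma mem_Gbar {r : ℕ} {ℓ : Fin r → ℕ} {f : Fin r → PowerSeries ℂ} :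
    f ∈ Gbar r ℓ ↔ ∀ i, (ℓ i : ℕ∞) ≤ (f i).order := Iff.rfl

lemma Gbar_sup (r : ℕ) (a b : Fin r → ℕ) : Gbar r (a ⊔ b) = Gbar r a ⊓ Gbar r b := by
  ext f
  simp only [Submodule.mem_inf, mem_Gbar, Pi.sup_apply, ← forall_and]
  exact forall_congr' fun i ↦ by rw [Nat.mono_cast.map_max, max_le_iff]

lemma Gbar_antitone (r : ℕ) : Antitone (Gbar r) := fun a b hab ↦ by
  rw [← inf_eq_right, ← Gbar_sup, sup_eq_right.mpr hab]

lemma Ffil_sup (r : ℕ) (O : Submodule ℂ (Fin r → PowerSeries ℂ)) (a b : Fin r → ℕ) :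
    Ffil r O (a ⊔ b) = Ffil r O a ⊓ Ffil r O b := by
  rw [Ffil, Ffil, Ffil, Gbar_sup, inf_inf_distrib_left]

lemma Ffil_antitone (r : ℕ) (O : Submodule ℂ (Fin r → PowerSeries ℂ)) : Antitone (Ffil r O) :=
  fun _ _ hab ↦ inf_le_inf_left O (Gbar_antitone r hab)

lemma Ffil_sup_eq_left {r : ℕ} {O : Submodule ℂ (Fin r → PowerSeries ℂ)} {a b c : Fin r → ℕ}
    (hF : Ffil r O b = Ffil r O a) (hac : a ≤ c) :
    Ffil r O (c ⊔ b) = Ffil r O c := by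
  rw [Ffil_sup, hF, inf_eq_left]
  exact Ffil_antitone r O hac

lemma le_add_eN {r : ℕ} (ℓ : Fin r → ℕ) (i : Fin r) : ℓ ≤ ℓ + eN i := fun _ ↦ by
  simp [eN]

lemma add_eN_sup_of_lt {r : ℕ} {ℓ m : Fin r → ℕ} {i : Fin r} (hle : ℓ ≤ m) (hlt : ℓ i < m i) :
    (ℓ + eN i) ⊔ m = m := by
  refine sup_eq_right.mpr fun j ↦ ?_
  by_cases hj : j = i
  · subst hj; simpa [eN] using hlt
  · simpa [eN, hj] using hle j

lemma add_eN_sup_of_eq {r : ℕ} {ℓ m : Fin r → ℕ} {i : Fin r} (hle : ℓ ≤ m) (heq : ℓ i = m i) :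
    (ℓ + eN i) ⊔ m = m + eN i := by
  funext j
  by_cases hj : j = i
  · subst hj; simp [eN, heq]
  · simpa [eN, hj] using hle j

theorem statement15_general (r : ℕ) (O : Submodule ℂ (Fin r → PowerSeries ℂ))
    (ℓ ℓstar : Fin r → ℕ)
    (hstar : Ffil r O ℓstar = Ffil r O ℓ)
    (hmax : ∀ ℓ' : Fin r → ℕ, Ffil r O ℓ' = Ffil r O ℓ → ℓ' ≤ ℓstar) :
    ∀ (G : Submodule ℂ (Fin r → PowerSeries ℂ)), G ≠ Ffil r O ℓ →
      ∀ i : Fin r,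
        (Ffil r O (ℓ + eN i) = G ↔ (Ffil r O (ℓstar + eN i) = G ∧ ℓ i = ℓstar i)) := by
  intro G hG i
  have hle : ℓ ≤ ℓstar := hmax ℓ rfl
  have hsup := Ffil_sup_eq_left hstar (le_add_eN ℓ i)
  rcases (hle i).lt_or_eq with hlt | heq
  · rw [add_eN_sup_of_lt hle hlt, hstar] at hsup
    exact iff_of_false (fun h ↦ hG (hsup.trans h).symm) (fun h ↦ hlt.ne h.2)
  · rw [add_eN_sup_of_eq hle heq] at hsup
    rw [← hsup]
    exact ⟨fun h ↦ ⟨h, heq⟩, And.left⟩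

/-- if `ℓ*` is the unique maximal point of the level set of `F(ℓ)`, then for
every subspace `G ≠ F(ℓ)` and every index `i`:
`F(ℓ+E_i) = G` if and only if `F(ℓ*+E_i) = G` and `ℓ_i = ℓ*_i`. -/
theorem statement15 (r : ℕ) (hr : 1 ≤ r) (O : Submodule ℂ (Fin r → PowerSeries ℂ))
    (ℓ ℓstar : Fin r → ℕ)
    (hstar : Ffil r O ℓstar = Ffil r O ℓ)
    (hmax : ∀ ℓ' : Fin r → ℕ, Ffil r O ℓ' = Ffil r O ℓ → ℓ' ≤ ℓstar) :
    ∀ (G : Submodule ℂ (Fin r → PowerSeries ℂ)), G ≠ Ffil r O ℓ →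
      ∀ i : Fin r,
        (Ffil r O (ℓ + eN i) = G ↔ (Ffil r O (ℓstar + eN i) = G ∧ ℓ i = ℓstar i)) :=
  statement15_general r O ℓ ℓstar hstar hmax
end
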